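/- arXiv:2509.08639 — 4 statements merged into one kernel-verified Lean document; each statement's English description precedes it below -/
import Mathlib

section
/- Let K be a field of characteristic 0, let k ≥ 1 be an integer, let f ∈ K[u], let Q ∈ K[x, y₁, …, y_k, t, u] be a polynomial, and let a ∈ K. Then there exists a unique formal power series F ∈ K[u]⟦t⟧ satisfying the discrete differential equation F = f(u) + t · Q(F, Δ_a F, Δ_a² F, …, Δ_a^k F, t, u), where the right-hand side is the image of Q under the ring homomorphism K[x, y₁, …, y_k, t, u] → K[u]⟦t⟧ sending x ↦ F, y_i ↦ Δ_a^i F, t ↦ t, and u ↦ the constant series with value the polynomial u. -/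
open PowerSeries Polynomial

/-- Divided difference operator `Δ_a F = (F − F(t,a))/(u − a)` on `K[u]⟦t⟧`,
computed coefficientwise by exact division by the monic polynomial `u − a`. -/
noncomputable def divDiff {K : Type*} [Field K] (a : K) (F : PowerSeries (Polynomial K)) :
    PowerSeries (Polynomial K) :=
  PowerSeries.mk fun n =>
    (PowerSeries.coeff n F
      - Polynomial.C ((PowerSeries.coeff n F).eval a)) /ₘ
      (Polynomial.X - Polynomial.C a)

/-- The right-hand side `f(u) + t · Q(F, Δ_a F, …, Δ_a^k F, t, u)` of a DDE of order `k`.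
Variables of `Q` are indexed by `Fin (k+3)`: index `0 ↦ x`, `1,…,k ↦ y₁,…,y_k`,
`k+1 ↦ t`, `k+2 ↦ u`. -/
noncomputable def ddeRhs {K : Type*} [Field K] (k : ℕ) (f : Polynomial K)
    (Q : MvPolynomial (Fin (k + 3)) K) (a : K) (F : PowerSeries (Polynomial K)) :
    PowerSeries (Polynomial K) :=
  PowerSeries.C f +
    PowerSeries.X *
      MvPolynomial.eval₂ ((PowerSeries.C : Polynomial K →+* PowerSeries (Polynomial K)).comp Polynomial.C)
        (fun (i : Fin (k + 3)) =>
          if (i : ℕ) = 0 then F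
          else if (i : ℕ) ≤ k then (divDiff a)^[(i : ℕ)] F
          else if (i : ℕ) = k + 1 then PowerSeries.X
          else PowerSeries.C (Polynomial.X : Polynomial K)) Q

namespace DDE

variable {K : Type*} [Field K]

def Cong (n : ℕ) (F G : PowerSeries (Polynomial K)) : Prop :=
  ∀ i < n, PowerSeries.coeff i F = PowerSeries.coeff i G

lemma cong_add {n : ℕ} {F G F' G' : PowerSeries (Polynomial K)}
    (h : Cong n F G) (h' : Cong n F' G') : Cong n (F + F') (G + G') := by
  intro i hi; simp [map_add, h i hi, h' i hi]

lemma cong_mul {n : ℕ} {F G F' G' : PowerSeries (Polynomial K)}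
    (h : Cong n F G) (h' : Cong n F' G') : Cong n (F * F') (G * G') := by
  intro i hi
  rw [PowerSeries.coeff_mul, PowerSeries.coeff_mul]
  refine Finset.sum_congr rfl fun p hp => ?_
  rw [Finset.HasAntidiagonal.mem_antidiagonal] at hp
  rw [h p.1 (lt_of_le_of_lt (hp ▸ Nat.le_add_right p.1 p.2) hi),
      h' p.2 (lt_of_le_of_lt (hp ▸ Nat.le_add_left p.2 p.1) hi)]

lemma cong_divDiff {n : ℕ} {a : K} {F G : PowerSeries (Polynomial K)}
    (h : Cong n F G) : Cong n (divDiff a F) (divDiff a G) := by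
  intro i hi
  simp only [divDiff, PowerSeries.coeff_mk, h i hi]

lemma cong_divDiff_iterate {n : ℕ} {a : K} (ℓ : ℕ) {F G : PowerSeries (Polynomial K)}
    (h : Cong n F G) : Cong n ((divDiff a)^[ℓ] F) ((divDiff a)^[ℓ] G) := by
  induction ℓ with
  | zero => simpa using h
  | succ m ih => simpa [Function.iterate_succ_apply'] using cong_divDiff ih

lemma cong_eval₂ {n : ℕ} {σ : Type*} (p : MvPolynomial σ K)
    {g g' : σ → PowerSeries (Polynomial K)}
    (h : ∀ i, Cong n (g i) (g' i)) :
    Cong n (MvPolynomial.eval₂ ((PowerSeries.C : Polynomial K →+* PowerSeries (Polynomial K)).comp Polynomial.C) g p)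
      (MvPolynomial.eval₂ ((PowerSeries.C : Polynomial K →+* PowerSeries (Polynomial K)).comp Polynomial.C) g' p) := by
  induction p using MvPolynomial.induction_on with
  | C c => intro i hi; simp
  | add p q hp hq => simpa [MvPolynomial.eval₂_add] using cong_add hp hq
  | mul_X p j hp =>
      simpa [MvPolynomial.eval₂_mul, MvPolynomial.eval₂_X] using cong_mul hp (h j)

lemma cong_ddeRhs {n k : ℕ} {f : Polynomial K} {Q : MvPolynomial (Fin (k + 3)) K} {a : K}
    {F G : PowerSeries (Polynomial K)} (h : Cong n F G) :
    Cong (n + 1) (ddeRhs k f Q a F) (ddeRhs k f Q a G) := by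
  have hE := cong_eval₂ (n := n) Q
    (g := fun (i : Fin (k + 3)) =>
          if (i : ℕ) = 0 then F
          else if (i : ℕ) ≤ k then (divDiff a)^[(i : ℕ)] F
          else if (i : ℕ) = k + 1 then PowerSeries.X
          else PowerSeries.C (Polynomial.X : Polynomial K))
    (g' := fun (i : Fin (k + 3)) =>
          if (i : ℕ) = 0 then G
          else if (i : ℕ) ≤ k then (divDiff a)^[(i : ℕ)] G
          else if (i : ℕ) = k + 1 then PowerSeries.X
          else PowerSeries.C (Polynomial.X : Polynomial K))
    (fun i => by
      split_ifs with h0 h1 h2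
      · exact h
      · exact cong_divDiff_iterate _ h
      · exact fun _ _ => rfl
      · exact fun _ _ => rfl)
  intro i hi
  unfold ddeRhs
  rw [map_add, map_add]
  cases i with
  | zero => simp
  | succ j =>
      rw [PowerSeries.coeff_succ_X_mul, PowerSeries.coeff_succ_X_mul,
        hE j (by omega)]

end DDE

/-- There is a unique formal power series `F ∈ K[u]⟦t⟧` satisfying the discrete
differential equation `F = f(u) + t · Q(F, Δ_a F, …, Δ_a^k F, t, u)`. -/
theorem dde_existsUnique_solution {K : Type*} [Field K] [CharZero K]
    (k : ℕ) (hk : 1 ≤ k) (f : Polynomial K) (Q : MvPolynomial (Fin (k + 3)) K) (a : K) :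
    ∃! F : PowerSeries (Polynomial K), F = ddeRhs k f Q a F := by
  classical
  set rhs : PowerSeries (Polynomial K) → PowerSeries (Polynomial K) := ddeRhs k f Q a with hrhs
  let seq : ℕ → PowerSeries (Polynomial K) := fun m => rhs^[m] 0
  have seq_succ : ∀ m, seq (m + 1) = rhs (seq m) := fun m => Function.iterate_succ_apply' _ _ _
  have hstep : ∀ m, DDE.Cong m (seq m) (seq (m + 1)) := by
    intro m
    induction m with
    | zero => intro i hi; omega
    | succ m ih =>
        rw [seq_succ, seq_succ]
        exact DDE.cong_ddeRhs ih
  have hstab : ∀ (i m n : ℕ), i < m → m ≤ n →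
      PowerSeries.coeff i (seq m) = PowerSeries.coeff i (seq n) := by
    intro i m n him hmn
    induction n, hmn using Nat.le_induction with
    | base => rfl
    | succ n hmn ih => rw [ih, hstep n i (by omega)]
  set F := PowerSeries.mk (fun n => PowerSeries.coeff n (seq (n + 1))) with hFdef
  have hcong : ∀ n, DDE.Cong n F (seq n) := by
    intro n i hi
    rw [hFdef, PowerSeries.coeff_mk]
    exact hstab i (i + 1) n (Nat.lt_succ_self i) hi
  have hF : F = rhs F := by
    ext n
    have h1 : PowerSeries.coeff n F
        = PowerSeries.coeff n (rhs (seq n)) := by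
      rw [hFdef, PowerSeries.coeff_mk, seq_succ]
    have h2 := DDE.cong_ddeRhs (k := k) (f := f) (Q := Q) (a := a) (hcong n) n (Nat.lt_succ_self n)
    rw [h1, ← h2]
  refine ⟨F, hF, ?_⟩
  intro G hG
  have hall : ∀ n, DDE.Cong n G F := by
    intro n
    induction n with
    | zero => intro i hi; omega
    | succ n ih =>
        rw [hG, hF]
        exact DDE.cong_ddeRhs ih
  refine PowerSeries.ext fun i => ?_
  exact hall (i + 1) i (Nat.lt_succ_self i)
end

section
/- The polynomial R₂(t,z) := 81t²z³ − 9t(9t−2)z² + (27t² − 66t + 1)z − 3t² + 47t − 1 has exactly one root in the ring ℚ⟦t⟧ of formal power series: there exists a unique G ∈ ℚ⟦t⟧ such that R₂(t, G) = 0. -/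
open Polynomial
open PowerSeries

/-- The polynomial `R₂(t,z) = 81t²z³ − 9t(9t−2)z² + (27t² − 66t + 1)z − 3t² + 47t − 1`,
viewed as an element of `ℚ[t][z]` (the outer variable is `z`, the inner one is `t`). -/
noncomputable def R2 : Polynomial (Polynomial ℚ) :=
  Polynomial.C (81 * Polynomial.X ^ 2) * Polynomial.X ^ 3
    - Polynomial.C (9 * Polynomial.X * (9 * Polynomial.X - 2)) * Polynomial.X ^ 2
    + Polynomial.C (27 * Polynomial.X ^ 2 - 66 * Polynomial.X + 1) * Polynomial.X
    + Polynomial.C (-3 * Polynomial.X ^ 2 + 47 * Polynomial.X - 1)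

lemma coeRingHom_X :
    Polynomial.coeToPowerSeries.ringHom (Polynomial.X : Polynomial ℚ) = PowerSeries.X := by
  simp [Polynomial.coeToPowerSeries.ringHom_apply]

lemma R2_eval₂ (G : PowerSeries ℚ) :
    Polynomial.eval₂ Polynomial.coeToPowerSeries.ringHom G R2 =
      81 * PowerSeries.X ^ 2 * G ^ 3
        - 9 * PowerSeries.X * (9 * PowerSeries.X - 2) * G ^ 2
        + (27 * PowerSeries.X ^ 2 - 66 * PowerSeries.X + 1) * G
        + (-3 * PowerSeries.X ^ 2 + 47 * PowerSeries.X - 1) := by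
  simp only [R2, eval₂_add, eval₂_sub, eval₂_mul, eval₂_pow, Polynomial.eval₂_C, Polynomial.eval₂_X, eval₂_ofNat,
    eval₂_one, eval₂_neg, map_mul, map_add, map_sub, map_pow, map_ofNat, map_one, map_neg,
    coeRingHom_X]

lemma mem_span_pow {n : ℕ} {f : PowerSeries ℚ} :
    f ∈ (Ideal.span {(PowerSeries.X : PowerSeries ℚ)}) ^ n ↔
      ∀ m < n, PowerSeries.coeff m f = 0 := by
  rw [Ideal.span_singleton_pow, Ideal.mem_span_singleton, PowerSeries.X_pow_dvd_iff]

instance adicPowerSeries :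
    IsAdicComplete (Ideal.span {(PowerSeries.X : PowerSeries ℚ)}) (PowerSeries ℚ) where
  haus' x hx := by
    simp only [SModEq.zero, smul_eq_mul, Ideal.mul_top, mem_span_pow] at hx
    exact PowerSeries.ext fun n => by simpa using hx (n + 1) n (Nat.lt_succ_self n)
  prec' x hx := by
    simp only [SModEq.sub_mem, smul_eq_mul, Ideal.mul_top, mem_span_pow] at hx ⊢
    refine ⟨PowerSeries.mk fun k => PowerSeries.coeff k (x (k + 1)), fun n m hm => ?_⟩
    have h := hx (Nat.succ_le_of_lt hm) m (Nat.lt_succ_self m)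
    simp only [map_sub, PowerSeries.coeff_mk, sub_eq_zero] at h ⊢
    exact h.symm


/-- `R₂` has exactly one root in `ℚ⟦t⟧`: there is a unique power series `G`
with `R₂(t, G) = 0`. -/
theorem R2_existsUnique_powerSeries_root :
    ∃! G : PowerSeries ℚ,
      Polynomial.eval₂ Polynomial.coeToPowerSeries.ringHom G R2 = 0 := by
  set T : PowerSeries ℚ := PowerSeries.X with hT
  -- the unit ε = 24T - 1
  have heps : IsUnit (24 * T - 1) := by
    rw [PowerSeries.isUnit_iff_constantCoeff]
    simp [hT]
  obtain ⟨U, hU⟩ := heps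
  set e : PowerSeries ℚ := ↑U⁻¹ with he'
  have he : (24 * T - 1) * e = 1 := by rw [← hU, he']; exact U.mul_inv
  -- the monic auxiliary polynomial
  set f : Polynomial (PowerSeries ℚ) :=
    Polynomial.X ^ 3 + Polynomial.C (e * (108 * T ^ 2 - 30 * T + 1)) * Polynomial.X ^ 2
      + Polynomial.C (e * (162 * T ^ 3 + 18 * T ^ 2)) * Polynomial.X
      + Polynomial.C (e * (81 * T ^ 4)) with hf
  have hmonic : f.Monic := by
    rw [hf]
    monicity!
  have heval1 : f.eval 1 ∈ Ideal.span {T} := by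
    rw [Ideal.mem_span_singleton]
    refine ⟨e * (81 * T ^ 3 + 162 * T ^ 2 + 126 * T - 6), ?_⟩
    rw [hf]
    simp only [Polynomial.eval_add, Polynomial.eval_mul, Polynomial.eval_pow, Polynomial.eval_C,
      Polynomial.eval_X, one_pow, mul_one]
    linear_combination (-1 : PowerSeries ℚ) * he
  have hce : PowerSeries.constantCoeff e = -1 := by
    have := congrArg (PowerSeries.constantCoeff) he
    simp only [map_mul, map_sub, map_one, map_ofNat, hT, PowerSeries.constantCoeff_X,
      mul_zero, zero_sub] at this
    linarith
  have hderiv : IsUnit (Ideal.Quotient.mk (Ideal.span {T}) (f.derivative.eval 1)) := by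
    refine IsUnit.map _ ?_
    rw [PowerSeries.isUnit_iff_constantCoeff]
    have : f.derivative.eval 1 =
        3 + 2 * (e * (108 * T ^ 2 - 30 * T + 1)) + e * (162 * T ^ 3 + 18 * T ^ 2) := by
      rw [hf]
      simp [Polynomial.derivative_pow]
      ring
    rw [this]
    simp only [map_add, map_mul, map_sub, map_pow, map_ofNat, map_one, hce, hT,
      PowerSeries.constantCoeff_X]
    norm_num
  obtain ⟨w, hwroot, hw1⟩ :=
    HenselianRing.is_henselian (R := PowerSeries ℚ) (I := Ideal.span {T}) f hmonic 1 heval1 hderiv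
  -- w is a unit
  have hwu : IsUnit w := by
    rw [PowerSeries.isUnit_iff_constantCoeff]
    rw [Ideal.mem_span_singleton] at hw1
    have h0 : PowerSeries.constantCoeff (w - 1) = 0 := by
      obtain ⟨d, hd⟩ := hw1
      rw [hd]
      simp [hT]
    have : PowerSeries.constantCoeff w = 1 := by
      have := congrArg (PowerSeries.constantCoeff) (sub_add_cancel w 1)
      simp only [map_add, h0] at this
      simpa using this.symm
    rw [this]; exact isUnit_one
  obtain ⟨W, hW⟩ := hwu
  set v : PowerSeries ℚ := ↑W⁻¹ with hv'
  have hv : w * v = 1 := by rw [← hW, hv']; exact W.mul_inv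
  -- the equation satisfied by w, without inverses of ε
  have hwe : w ^ 3 + e * (108 * T ^ 2 - 30 * T + 1) * w ^ 2
      + e * (162 * T ^ 3 + 18 * T ^ 2) * w + e * (81 * T ^ 4) = 0 := by
    have := hwroot
    rw [Polynomial.IsRoot, hf] at this
    simpa [Polynomial.eval_add, Polynomial.eval_mul, Polynomial.eval_pow] using this
  have hw' : (24 * T - 1) * w ^ 3 + (108 * T ^ 2 - 30 * T + 1) * w ^ 2
      + (162 * T ^ 3 + 18 * T ^ 2) * w + 81 * T ^ 4 = 0 := by
    linear_combination (24 * T - 1) * hwe -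
      ((108 * T ^ 2 - 30 * T + 1) * w ^ 2 + (162 * T ^ 3 + 18 * T ^ 2) * w + 81 * T ^ 4) * he
  refine ⟨1 + T * v, ?_, ?_⟩
  · show Polynomial.eval₂ Polynomial.coeToPowerSeries.ringHom (1 + T * v) R2 = 0
    rw [R2_eval₂, ← hT]
    linear_combination (T * v ^ 3) * hw' +
      (T - T * v + T * w * v - T * w * v ^ 2 + T * w ^ 2 * v ^ 2 - 24 * T ^ 2 + 30 * T ^ 2 * v
        - 24 * T ^ 2 * w * v + 30 * T ^ 2 * w * v ^ 2 - 24 * T ^ 2 * w ^ 2 * v ^ 2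
        - 108 * T ^ 3 * v - 18 * T ^ 3 * v ^ 2 - 108 * T ^ 3 * w * v ^ 2
        - 162 * T ^ 4 * v ^ 2) * hv
  · intro H hH
    have hG : Polynomial.eval₂ Polynomial.coeToPowerSeries.ringHom (1 + T * v) R2 = 0 := by
      rw [R2_eval₂, ← hT]
      linear_combination (T * v ^ 3) * hw' +
        (T - T * v + T * w * v - T * w * v ^ 2 + T * w ^ 2 * v ^ 2 - 24 * T ^ 2 + 30 * T ^ 2 * v
          - 24 * T ^ 2 * w * v + 30 * T ^ 2 * w * v ^ 2 - 24 * T ^ 2 * w ^ 2 * v ^ 2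
          - 108 * T ^ 3 * v - 18 * T ^ 3 * v ^ 2 - 108 * T ^ 3 * w * v ^ 2
          - 162 * T ^ 4 * v ^ 2) * hv
    rw [R2_eval₂, ← hT] at hH hG
    set G : PowerSeries ℚ := 1 + T * v with hGdef
    have hS : (H - G) * (81 * T ^ 2 * (H ^ 2 + H * G + G ^ 2)
        - 9 * T * (9 * T - 2) * (H + G) + (27 * T ^ 2 - 66 * T + 1)) = 0 := by
      linear_combination hH - hG
    have hSne : (81 * T ^ 2 * (H ^ 2 + H * G + G ^ 2)
        - 9 * T * (9 * T - 2) * (H + G) + (27 * T ^ 2 - 66 * T + 1)) ≠ 0 := by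
      intro h
      have := congrArg (PowerSeries.constantCoeff) h
      simp only [map_add, map_sub, map_mul, map_pow, map_ofNat, map_one, hT,
        PowerSeries.constantCoeff_X, map_zero] at this
      norm_num at this
    have := mul_eq_zero.mp hS
    rcases this with h | h
    · exact sub_eq_zero.mp h
    · exact absurd h hSne
end

section
/- Let G := Σ_{n≥0} c_n tⁿ ∈ ℚ⟦t⟧, where c₀ = 1 and c_n = (4·3^{n−1} / ((2n+2)(2n+1))) · binom(3n, n) for n ≥ 1. Then R₂(t, G) = 0, where R₂(t,z) := 81t²z³ − 9t(9t−2)z² + (27t² − 66t + 1)z − 3t² + 47t − 1. In other words, the generating function of 3-constellations is the power series root of R₂. -/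
open Polynomial

/-- The sequence counting 3-constellations: `c₀ = 1` and
`c_n = (4·3^(n−1) / ((2n+2)(2n+1))) · binom(3n, n)` for `n ≥ 1`. -/
noncomputable def c3 : ℕ → ℚ := fun n =>
  if n = 0 then 1
  else (4 * 3 ^ (n - 1) : ℚ) / ((2 * (n : ℚ) + 2) * (2 * (n : ℚ) + 1))
        * ((3 * n).choose n : ℚ)

noncomputable section ConstellationAux

open PowerSeries

local notation "X" => (PowerSeries.X : ℚ⟦X⟧)
local notation "D" => (PowerSeries.derivative ℚ)

lemma D_ofNat (n : ℕ) [n.AtLeastTwo] :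
    D (no_index (OfNat.ofNat n) : ℚ⟦X⟧) = 0 := by
  rw [← Nat.cast_ofNat, Derivation.map_natCast]

lemma coeff_ofNat_mul (m : ℕ) [m.AtLeastTwo] (f : ℚ⟦X⟧) (n : ℕ) :
    PowerSeries.coeff n ((no_index (OfNat.ofNat m) : ℚ⟦X⟧) * f)
      = (OfNat.ofNat m : ℚ) * PowerSeries.coeff n f := by
  rw [show ((OfNat.ofNat m : ℚ⟦X⟧)) = PowerSeries.C (OfNat.ofNat m) from
    (map_ofNat _ _).symm, PowerSeries.coeff_C_mul]

/-- one step of the fixed-point iteration defining the power series root of R2 -/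
def phi (S : ℚ⟦X⟧) : ℚ⟦X⟧ :=
  1 - X * (81*X*S^3 - 81*X*S^2 + 18*S^2 + 27*X*S - 66*S - 3*X + 47)

lemma phi_contract {S S' : ℚ⟦X⟧} {k : ℕ} (h : X^k ∣ S - S') :
    X^(k+1) ∣ phi S - phi S' := by
  obtain ⟨d, hd⟩ := h
  have hS : S = S' + X^k * d := by linear_combination hd
  refine ⟨-(d * (81*X*(S^2 + S*S' + S'^2) - 81*X*(S+S') + 18*(S+S') + 27*X - 66)), ?_⟩
  rw [phi, phi, hS]; ring

lemma tower (n : ℕ) : X^(n+1) ∣ phi^[n+1] 1 - phi^[n] 1 := by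
  induction n with
  | zero =>
    refine ⟨1 - 24*X, ?_⟩
    show phi^[0+1] 1 - phi^[0] 1 = _
    simp only [zero_add, Function.iterate_one, Function.iterate_zero, id_eq, phi]
    ring
  | succ n ih =>
    have h2 := phi_contract ih
    rwa [← Function.iterate_succ_apply' phi (n+1), ← Function.iterate_succ_apply' phi n] at h2

/-- coefficients of the root -/
def hc : ℕ → ℚ := fun k => PowerSeries.coeff k (phi^[k+1] 1)

/-- the power series root of R2 -/
def Hs : ℚ⟦X⟧ := PowerSeries.mk hc

lemma coeff_iter {j n : ℕ} (h : j < n) : PowerSeries.coeff j (phi^[n] 1) = hc j := by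
  induction n with
  | zero => omega
  | succ n ih =>
    rcases Nat.lt_or_ge j n with h' | h'
    · have hd := tower n
      rw [PowerSeries.X_pow_dvd_iff] at hd
      have h0 := hd j (by omega)
      rw [map_sub] at h0
      have h1 : PowerSeries.coeff j (phi^[n+1] 1) = PowerSeries.coeff j (phi^[n] 1) := by
        linarith [h0]
      rw [h1, ih h']
    · have : j = n := by omega
      subst this
      rfl

lemma Hs_dvd (k : ℕ) : X^k ∣ Hs - phi^[k] 1 := by
  rw [PowerSeries.X_pow_dvd_iff]
  intro m hm
  rw [map_sub, Hs, PowerSeries.coeff_mk, coeff_iter hm, sub_self]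

lemma Hs_fix : phi Hs = Hs := by
  ext j
  have hd := phi_contract (Hs_dvd j)
  rw [← Function.iterate_succ_apply' phi j 1, PowerSeries.X_pow_dvd_iff] at hd
  have h0 := hd j (by omega)
  rw [map_sub, sub_eq_zero] at h0
  rw [h0, coeff_iter (Nat.lt_succ_self j), Hs, PowerSeries.coeff_mk]

lemma E0 : 81*X^2*Hs^3 - 81*X^2*Hs^2 + 18*X*Hs^2 + 27*X^2*Hs - 66*X*Hs + Hs
    - 3*X^2 + 47*X - 1 = 0 := by
  have h := Hs_fix
  rw [phi] at h
  linear_combination -h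

lemma Hs_const : PowerSeries.coeff 0 Hs = 1 := by
  rw [Hs, PowerSeries.coeff_mk]
  show PowerSeries.coeff 0 (phi^[0+1] 1) = 1
  simp [phi]

lemma Hs_const' : PowerSeries.constantCoeff Hs = 1 := by
  have := Hs_const
  rwa [PowerSeries.coeff_zero_eq_constantCoeff] at this

lemma E1 : 162*X*Hs^3 + 243*X^2*Hs^2*(D Hs) - 162*X*Hs^2 + 18*Hs^2 - 162*X^2*Hs*(D Hs)
    + 36*X*Hs*(D Hs) + 54*X*Hs - 66*Hs + 27*X^2*(D Hs) - 66*X*(D Hs) + (D Hs)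
    - 6*X + 47 = 0 := by
  have h := congrArg (⇑D) E0
  simp only [map_sub, map_add, map_one, map_zero, Derivation.leibniz, Derivation.leibniz_pow,
    PowerSeries.derivative_X, D_ofNat, smul_eq_mul, nsmul_eq_mul, Nat.cast_ofNat, mul_zero,
    zero_mul, mul_one, add_zero, zero_add, sub_zero, Derivation.map_one_eq_zero] at h
  linear_combination h

lemma E2 : 162*Hs^3 + 972*X*Hs^2*(D Hs) + 243*X^2*Hs^2*(D (D Hs)) - 162*Hs^2
    + 486*X^2*Hs*(D Hs)^2 - 648*X*Hs*(D Hs) + 72*Hs*(D Hs) - 162*X^2*Hs*(D (D Hs))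
    + 36*X*Hs*(D (D Hs)) + 54*Hs - 162*X^2*(D Hs)^2 + 36*X*(D Hs)^2 + 108*X*(D Hs)
    - 132*(D Hs) + 27*X^2*(D (D Hs)) - 66*X*(D (D Hs)) + (D (D Hs)) - 6 = 0 := by
  have h := congrArg (⇑D) E1
  simp only [map_sub, map_add, map_one, map_zero, Derivation.leibniz, Derivation.leibniz_pow,
    PowerSeries.derivative_X, D_ofNat, smul_eq_mul, nsmul_eq_mul, Nat.cast_ofNat, mul_zero,
    zero_mul, mul_one, add_zero, zero_add, sub_zero, Derivation.map_one_eq_zero] at h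
  linear_combination h

lemma odeH : 4*(X^2*(D (D Hs))) - 81*(X^3*(D (D Hs))) + 10*(X*(D Hs)) - 162*(X^2*(D Hs))
    + 2*Hs - 18*(X*Hs) = 2 - 6*X := by
  have hW : (243*X^2*Hs^2 - 162*X^2*Hs + 36*X*Hs + 27*X^2 - 66*X + 1 : ℚ⟦X⟧) ≠ 0 := by
    intro hzero
    have := congrArg (PowerSeries.constantCoeff) hzero
    simp [map_mul, map_add, map_sub, map_pow, Hs_const'] at this
  have key : (243*X^2*Hs^2 - 162*X^2*Hs + 36*X*Hs + 27*X^2 - 66*X + 1 : ℚ⟦X⟧)^3 *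
      ((4*X^2-81*X^3)*(D (D Hs)) + (10*X-162*X^2)*(D Hs) + (2-18*X)*Hs - (2-6*X)) = 0 := by
    linear_combination
      (-39366*X^4*Hs^4 + 52488*X^4*Hs^3 - 11664*X^3*Hs^3 - 26244*X^4*Hs^2 + 24786*X^3*Hs^2
        - 972*X^2*Hs^2 + 1068714*X^4*Hs - 91368*X^3*Hs + 3564*X^2*Hs - 354780*X^4
        + 106866*X^3 - 9828*X^2 + 162*X + 2) * E0 +
      (3188646*X^6*Hs^4 - 39366*X^5*Hs^4 + 9565938*X^7*Hs^3*(D Hs) - 472392*X^6*Hs^3*(D Hs)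
        - 4251528*X^6*Hs^3 + 288684*X^5*Hs^3 + 23328*X^4*Hs^3 - 9565938*X^7*Hs^2*(D Hs)
        + 2598156*X^6*Hs^2*(D Hs) - 104976*X^5*Hs^2*(D Hs) + 2125764*X^6*Hs^2
        - 262440*X^5*Hs^2 - 128304*X^4*Hs^2 + 6156*X^3*Hs^2 + 3188646*X^7*Hs*(D Hs)
        - 3700404*X^6*Hs*(D Hs) + 319302*X^5*Hs*(D Hs) - 7128*X^4*Hs*(D Hs)
        - 472392*X^6*Hs - 978318*X^5*Hs + 287712*X^4*Hs - 25488*X^3*Hs + 432*X^2*Hs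
        - 354294*X^7*(D Hs) + 962280*X^6*(D Hs) - 252234*X^5*(D Hs) + 13068*X^4*(D Hs)
        - 144*X^3*(D Hs) + 39366*X^6 + 345060*X^5 - 161244*X^4 + 26280*X^3 - 954*X^2
        + 10*X) * E1 +
      (-4782969*X^7*Hs^4 + 236196*X^6*Hs^4 + 6377292*X^7*Hs^3 - 1732104*X^6*Hs^3
        + 69984*X^5*Hs^3 - 3188646*X^7*Hs^2 + 3700404*X^6*Hs^2 - 319302*X^5*Hs^2
        + 7128*X^4*Hs^2 + 708588*X^7*Hs - 1924560*X^6*Hs + 504468*X^5*Hs - 26136*X^4*Hs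
        + 288*X^3*Hs - 59049*X^7 + 291600*X^6 - 371466*X^5 + 28332*X^4 - 609*X^3
        + 4*X^2) * E2
  rcases mul_eq_zero.mp key with h | h
  · exact absurd (pow_eq_zero_iff (by norm_num)|>.mp h) hW
  · linear_combination h

lemma choose_key (n : ℕ) : (((3*n+6).choose (n+2) : ℚ)) * ((2*(n:ℚ)+4)*(2*(n:ℚ)+3))
    = 3*(3*(n:ℚ)+5)*(3*(n:ℚ)+4)*(((3*n+3).choose (n+1) : ℚ)) := by
  have h1 : (n:ℕ)+2 ≤ 3*n+6 := by omega
  have h2 : (n:ℕ)+1 ≤ 3*n+3 := by omega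
  rw [Nat.cast_choose ℚ h1, Nat.cast_choose ℚ h2]
  have e1 : 3*n+6 - (n+2) = 2*n+4 := by omega
  have e2 : 3*n+3 - (n+1) = 2*n+2 := by omega
  rw [e1, e2]
  have f1 : (3*n+6).factorial = (3*n+6)*((3*n+5)*((3*n+4)*(3*n+3).factorial)) := by
    rw [show 3*n+6 = (3*n+5)+1 by omega, Nat.factorial_succ,
      show 3*n+5 = (3*n+4)+1 by omega, Nat.factorial_succ,
      show 3*n+4 = (3*n+3)+1 by omega, Nat.factorial_succ]
  have f2 : (2*n+4).factorial = (2*n+4)*((2*n+3)*(2*n+2).factorial) := by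
    rw [show 2*n+4 = (2*n+3)+1 by omega, Nat.factorial_succ,
      show 2*n+3 = (2*n+2)+1 by omega, Nat.factorial_succ]
  have f3 : (n+2).factorial = (n+2)*(n+1).factorial := by
    rw [show n+2 = (n+1)+1 by omega, Nat.factorial_succ]
  rw [f1, f2, f3]
  have hne1 : ((3*n+3).factorial : ℚ) ≠ 0 := by exact_mod_cast (Nat.factorial_pos _).ne'
  have hne2 : ((2*n+2).factorial : ℚ) ≠ 0 := by exact_mod_cast (Nat.factorial_pos _).ne'
  have hne3 : ((n+1).factorial : ℚ) ≠ 0 := by exact_mod_cast (Nat.factorial_pos _).ne'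
  push_cast
  field_simp
  ring

lemma c3_rec (n : ℕ) : (2*(n:ℚ)+6)*(2*(n:ℚ)+5)*c3 (n+2) = 9*(3*(n:ℚ)+5)*(3*(n:ℚ)+4)*c3 (n+1) := by
  have key := choose_key n
  simp only [c3, OfNat.ofNat_ne_zero, one_ne_zero, Nat.add_eq_zero, and_false, if_false, if_neg (by omega : ¬ n+2 = 0),
    if_neg (by omega : ¬ n+1 = 0)]
  have e1 : n+2-1 = n+1 := by omega
  have e2 : n+1-1 = n := by omega
  rw [e1, e2, show 3*(n+2) = 3*n+6 by ring, show 3*(n+1) = 3*n+3 by ring]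
  push_cast
  have d1 : (2*(n:ℚ)+4)*(2*(n:ℚ)+3) ≠ 0 := by positivity
  have d2 : (2*(n:ℚ)+6)*(2*(n:ℚ)+5) ≠ 0 := by positivity
  field_simp
  linear_combination (3*(3:ℚ)^n*((n:ℚ)+3)*(2*(n:ℚ)+5)) * key

lemma c3_zero : c3 0 = 1 := by simp [c3]
lemma c3_one : c3 1 = 1 := by norm_num [c3]
lemma c3_two : c3 2 = 6 := by norm_num [c3, Nat.choose]

lemma coeff_canon (f : ℚ⟦X⟧) (m : ℕ) :
    PowerSeries.coeff (m+3) (4*(X^2*(D (D f))) - 81*(X^3*(D (D f))) + 10*(X*(D f))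
      - 162*(X^2*(D f)) + 2*f - 18*(X*f))
    = (2*(m:ℚ)+7)*(2*(m:ℚ)+8)*(PowerSeries.coeff (m+3) f)
      - 9*(3*(m:ℚ)+8)*(3*(m:ℚ)+7)*(PowerSeries.coeff (m+2) f) := by
  rw [show (X*(D f)) = X^1*(D f) by ring, show (X*f) = X^1*f by ring]
  simp only [map_sub, map_add, coeff_ofNat_mul, PowerSeries.coeff_X_pow_mul',
    PowerSeries.coeff_derivative, show (1:ℕ) ≤ m+3 by omega, show (2:ℕ) ≤ m+3 by omega,
    show (3:ℕ) ≤ m+3 by omega, if_true, show m+3-1 = m+2 by omega, show m+3-2 = m+1 by omega,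
    show m+3-3 = m by omega]
  push_cast
  ring

lemma coeff_canon_zero (f : ℚ⟦X⟧) :
    PowerSeries.coeff 0 (4*(X^2*(D (D f))) - 81*(X^3*(D (D f))) + 10*(X*(D f))
      - 162*(X^2*(D f)) + 2*f - 18*(X*f)) = 2*(PowerSeries.coeff 0 f) := by
  rw [show (X*(D f)) = X^1*(D f) by ring, show (X*f) = X^1*f by ring]
  simp only [map_sub, map_add, coeff_ofNat_mul, PowerSeries.coeff_X_pow_mul',
    PowerSeries.coeff_derivative]
  norm_num

lemma coeff_canon_one (f : ℚ⟦X⟧) :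
    PowerSeries.coeff 1 (4*(X^2*(D (D f))) - 81*(X^3*(D (D f))) + 10*(X*(D f))
      - 162*(X^2*(D f)) + 2*f - 18*(X*f))
    = 12*(PowerSeries.coeff 1 f) - 18*(PowerSeries.coeff 0 f) := by
  rw [show (X*(D f)) = X^1*(D f) by ring, show (X*f) = X^1*f by ring]
  simp only [map_sub, map_add, coeff_ofNat_mul, PowerSeries.coeff_X_pow_mul',
    PowerSeries.coeff_derivative]
  norm_num
  ring

lemma coeff_canon_two (f : ℚ⟦X⟧) :
    PowerSeries.coeff 2 (4*(X^2*(D (D f))) - 81*(X^3*(D (D f))) + 10*(X*(D f))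
      - 162*(X^2*(D f)) + 2*f - 18*(X*f))
    = 30*(PowerSeries.coeff 2 f) - 180*(PowerSeries.coeff 1 f) := by
  rw [show (X*(D f)) = X^1*(D f) by ring, show (X*f) = X^1*f by ring]
  simp only [map_sub, map_add, coeff_ofNat_mul, PowerSeries.coeff_X_pow_mul',
    PowerSeries.coeff_derivative]
  norm_num
  ring

lemma coeff_rhs (k : ℕ) : PowerSeries.coeff k ((2:ℚ⟦X⟧) - 6*X)
    = if k = 0 then 2 else if k = 1 then -6 else 0 := by
  rw [map_sub, coeff_ofNat_mul, show ((2:ℚ⟦X⟧)) = PowerSeries.C 2 from (map_ofNat _ _).symm,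
    PowerSeries.coeff_C, PowerSeries.coeff_X]
  rcases k with _ | _ | k <;> norm_num

/-- the generating function -/
def Gs : ℚ⟦X⟧ := PowerSeries.mk c3

lemma odeG : 4*(X^2*(D (D Gs))) - 81*(X^3*(D (D Gs))) + 10*(X*(D Gs)) - 162*(X^2*(D Gs))
    + 2*Gs - 18*(X*Gs) = 2 - 6*X := by
  ext k
  rw [coeff_rhs]
  rcases k with _ | _ | _ | m
  · rw [coeff_canon_zero, Gs, PowerSeries.coeff_mk, c3_zero]; norm_num
  · rw [coeff_canon_one, Gs, PowerSeries.coeff_mk, PowerSeries.coeff_mk, c3_zero, c3_one]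
    norm_num
  · rw [coeff_canon_two, Gs, PowerSeries.coeff_mk, PowerSeries.coeff_mk, c3_one, c3_two]
    norm_num
  · rw [show m+1+1+1 = m+3 from rfl, coeff_canon, Gs, PowerSeries.coeff_mk,
      PowerSeries.coeff_mk]
    have := c3_rec (m+1)
    push_cast at this ⊢
    linear_combination this


lemma coeff_diff_zero : ∀ n : ℕ, PowerSeries.coeff n (Gs - Hs) = 0 := by
  have odeD : 4*(X^2*(D (D (Gs - Hs)))) - 81*(X^3*(D (D (Gs - Hs)))) + 10*(X*(D (Gs - Hs)))
      - 162*(X^2*(D (Gs - Hs))) + 2*(Gs - Hs) - 18*(X*(Gs - Hs)) = 0 := by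
    rw [map_sub, map_sub]
    have hG := odeG
    have hH := odeH
    linear_combination hG - hH
  intro n
  induction n using Nat.strong_induction_on with
  | _ n ih =>
    match n with
    | 0 =>
      rw [map_sub, Gs, PowerSeries.coeff_mk, c3_zero, Hs_const, sub_self]
    | 1 =>
      have h0 : PowerSeries.coeff 0 (Gs - Hs) = 0 := ih 0 (by omega)
      have e := congrArg (PowerSeries.coeff 1) odeD
      rw [coeff_canon_one, map_zero, h0] at e
      linarith
    | 2 =>
      have h1 : PowerSeries.coeff 1 (Gs - Hs) = 0 := ih 1 (by omega)
      have e := congrArg (PowerSeries.coeff 2) odeD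
      rw [coeff_canon_two, map_zero, h1] at e
      linarith
    | (m+3) =>
      have h2 : PowerSeries.coeff (m+2) (Gs - Hs) = 0 := ih (m+2) (by omega)
      have e := congrArg (PowerSeries.coeff (m+3)) odeD
      rw [coeff_canon, map_zero, h2] at e
      have hco : (2*(m:ℚ)+7)*(2*(m:ℚ)+8) ≠ 0 := by positivity
      have : (2*(m:ℚ)+7)*(2*(m:ℚ)+8)*(PowerSeries.coeff (m+3) (Gs - Hs)) = 0 := by
        linarith
      exact (mul_eq_zero.mp this).resolve_left hco

lemma Gs_eq_Hs : Gs = Hs := by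
  ext n
  have := coeff_diff_zero n
  rw [map_sub, sub_eq_zero] at this
  exact this

end ConstellationAux

/-- The generating function `G = Σ c_n tⁿ` of 3-constellations is a power series root
of `R₂`: `R₂(t, G) = 0`. -/
theorem R2_of_constellation_gf_eq_zero :
    Polynomial.eval₂ Polynomial.coeToPowerSeries.ringHom (PowerSeries.mk c3) R2 = 0 := by
  rw [show (PowerSeries.mk c3) = Hs from Gs_eq_Hs]
  simp only [R2, eval₂_add, eval₂_sub, eval₂_mul, eval₂_C, eval₂_X, eval₂_X_pow, eval₂_pow,
    eval₂_ofNat, eval₂_neg, eval₂_one, map_mul, map_sub, map_add, map_ofNat, map_one, map_pow,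
    map_neg, coeToPowerSeries.ringHom_apply, Polynomial.coe_X]
  linear_combination E0
end

section
/- (Stickelberger-type characteristic polynomial formula.) Let K be an algebraically closed field of characteristic 0, let I ⊆ K[x₁, …, x_n] be a radical ideal whose zero set V(I) ⊆ Kⁿ is finite, and suppose the quotient algebra A := K[x₁, …, x_n]/I is finite-dimensional as a K-vector space. Let m_{x₁} : A → A be the K-linear map of multiplication by (the class of) x₁, and let χ_{x₁} ∈ K[T] be its characteristic polynomial. Then χ_{x₁}(T) = ∏_{α ∈ V(I)} (T − α₁), where α₁ denotes the first coordinate of α. -/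
open Polynomial


lemma charpoly_conj_aux {K M N : Type*} [Field K] [AddCommGroup M] [Module K M]
    [AddCommGroup N] [Module K N] [FiniteDimensional K M] [FiniteDimensional K N]
    (e : M ≃ₗ[K] N) (f : N →ₗ[K] N) :
    (e.symm.toLinearMap ∘ₗ f ∘ₗ e.toLinearMap).charpoly = f.charpoly := by
  classical
  let b := Module.finBasis K M
  rw [← LinearMap.charpoly_toMatrix f (b.map e),
    ← LinearMap.charpoly_toMatrix (e.symm.toLinearMap ∘ₗ f ∘ₗ e.toLinearMap) b]
  congr 1

lemma matrix_charpoly_diagonal {K ι : Type*} [Field K] [Fintype ι] [DecidableEq ι] (d : ι → K) :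
    (Matrix.diagonal d).charpoly = ∏ i, (X - C (d i)) := by
  have h : Matrix.charmatrix (Matrix.diagonal d) = Matrix.diagonal fun i => (X : K[X]) - C (d i) := by
    ext i j
    by_cases hij : i = j
    · subst hij; simp [Matrix.charmatrix_apply_eq]
    · rw [Matrix.charmatrix_apply_ne _ _ _ hij, Matrix.diagonal_apply_ne _ hij,
        Matrix.diagonal_apply_ne _ hij]
      simp
  rw [Matrix.charpoly, h, Matrix.det_diagonal]

/-- **Stickelberger-type characteristic polynomial formula.**
Let `K` be an algebraically closed field of characteristic `0`, `I ⊆ K[x₁,…,x_n]` a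
radical ideal whose zero set `V(I)` (here given as the finset `V`) is finite, and suppose
the quotient algebra `A = K[x₁,…,x_n]/I` is finite-dimensional over `K`.  Then the
characteristic polynomial of the multiplication-by-`x₁` map on `A` is
`∏_{α ∈ V(I)} (T − α₁)`. -/
theorem charpoly_mul_first_coordinate
    (K : Type*) [Field K] [IsAlgClosed K] [CharZero K]
    (n : ℕ) (hn : 0 < n)
    (I : Ideal (MvPolynomial (Fin n) K)) (hrad : I.IsRadical)
    (V : Finset (Fin n → K))
    (hV : ∀ α : Fin n → K, α ∈ V ↔ ∀ p ∈ I, MvPolynomial.eval α p = 0)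
    [FiniteDimensional K (MvPolynomial (Fin n) K ⧸ I)] :
    (LinearMap.mulLeft K
        (Ideal.Quotient.mk I (MvPolynomial.X (⟨0, hn⟩ : Fin n)))).charpoly
      = ∏ α ∈ V, (Polynomial.X - Polynomial.C (α ⟨0, hn⟩)) := by
  classical
  set x₀ : Fin n := ⟨0, hn⟩ with hx₀
  -- evaluation algebra homomorphism
  let ev : MvPolynomial (Fin n) K →ₐ[K] (↥V → K) :=
    Pi.algHom K _ fun α => MvPolynomial.aeval (α : Fin n → K)
  have hev : ∀ (p : MvPolynomial (Fin n) K) (α : ↥V),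
      ev p α = MvPolynomial.eval (α : Fin n → K) p := by
    intro p α
    show MvPolynomial.aeval (α : Fin n → K) p = _
    rfl
  have hker : ∀ p ∈ I, ev p = 0 := by
    intro p hp
    funext α
    rw [hev]
    exact (hV α).mp α.2 p hp
  let φ : (MvPolynomial (Fin n) K ⧸ I) →ₐ[K] (↥V → K) := Ideal.Quotient.liftₐ I ev hker
  have hφmk : ∀ (p : MvPolynomial (Fin n) K) (α : ↥V),
      φ (Ideal.Quotient.mk I p) α = MvPolynomial.eval (α : Fin n → K) p := by
    intro p α
    have h1 : φ (Ideal.Quotient.mk I p) = ev p := by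
      simp [φ, Ideal.Quotient.liftₐ_apply, Ideal.Quotient.lift_mk]
      rfl
    rw [h1, hev]
  -- injectivity via the Nullstellensatz
  have hinj : Function.Injective φ := by
    rw [injective_iff_map_eq_zero]
    intro a ha
    obtain ⟨p, rfl⟩ := Ideal.Quotient.mk_surjective a
    rw [Ideal.Quotient.eq_zero_iff_mem]
    have hp : ∀ α ∈ V, MvPolynomial.eval α p = 0 := by
      intro α hα
      have := congrFun ha ⟨α, hα⟩
      rwa [hφmk] at this
    have hZ : MvPolynomial.zeroLocus K I = (↑V : Set (Fin n → K)) := by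
      ext α
      simp only [MvPolynomial.mem_zeroLocus_iff, Finset.coe_mem, Set.mem_setOf_eq,
        Finset.mem_coe, hV]
      exact Iff.rfl
    have hmem : p ∈ MvPolynomial.vanishingIdeal K (MvPolynomial.zeroLocus K I) := by
      rw [hZ, MvPolynomial.mem_vanishingIdeal_iff]
      intro α hα
      exact hp α hα
    rwa [MvPolynomial.vanishingIdeal_zeroLocus_eq_radical, hrad.radical] at hmem
  -- interpolation polynomials
  have interp : ∀ α : ↥V, ∃ p : MvPolynomial (Fin n) K,
      ∀ β : ↥V, MvPolynomial.eval (β : Fin n → K) p = if β = α then 1 else 0 := by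
    intro α
    have key : ∀ β : ↥V, ∃ q : MvPolynomial (Fin n) K,
        MvPolynomial.eval (α : Fin n → K) q = 1 ∧
          (β ≠ α → MvPolynomial.eval (β : Fin n → K) q = 0) := by
      intro β
      by_cases hβ : β = α
      · exact ⟨1, by simp, fun h => absurd hβ h⟩
      · have hne : (α : Fin n → K) ≠ (β : Fin n → K) := by
          intro h
          exact hβ (Subtype.ext h.symm)
        obtain ⟨i, hi⟩ := Function.ne_iff.mp hne
        refine ⟨MvPolynomial.C (((α : Fin n → K) i - (β : Fin n → K) i)⁻¹) *
            (MvPolynomial.X i - MvPolynomial.C ((β : Fin n → K) i)), ?_, ?_⟩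
        · simp [inv_mul_cancel₀ (sub_ne_zero.mpr hi)]
        · intro _
          simp
    choose q hq1 hq0 using key
    refine ⟨∏ β ∈ Finset.univ.erase α, q β, ?_⟩
    intro γ
    rw [map_prod]
    by_cases hγ : γ = α
    · subst hγ
      rw [if_pos rfl]
      apply Finset.prod_eq_one
      intro β hβ
      exact hq1 β
    · rw [if_neg hγ]
      exact Finset.prod_eq_zero (Finset.mem_erase.mpr ⟨hγ, Finset.mem_univ γ⟩) (hq0 γ hγ)
  -- surjectivity
  have hsurj : Function.Surjective φ := by
    have : Function.Surjective ⇑φ.toLinearMap → Function.Surjective ⇑φ := fun h => h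
    apply this
    rw [← LinearMap.range_eq_top]
    rw [← top_le_iff, ← (Pi.basisFun K ↥V).span_eq]
    rw [Submodule.span_le]
    rintro _ ⟨α, rfl⟩
    obtain ⟨p, hp⟩ := interp α
    refine ⟨Ideal.Quotient.mk I p, ?_⟩
    funext β
    rw [AlgHom.toLinearMap_apply, hφmk, hp β, Pi.basisFun_apply, Pi.single_apply]
  let e : (MvPolynomial (Fin n) K ⧸ I) ≃ₐ[K] (↥V → K) :=
    AlgEquiv.ofBijective φ ⟨hinj, hsurj⟩
  let d : ↥V → K := fun α => (α : Fin n → K) x₀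
  have hφa : e (Ideal.Quotient.mk I (MvPolynomial.X x₀)) = d := by
    funext α
    show φ (Ideal.Quotient.mk I (MvPolynomial.X x₀)) α = d α
    rw [hφmk]
    simp [d]
  have hconj : LinearMap.mulLeft K (Ideal.Quotient.mk I (MvPolynomial.X x₀)) =
      e.toLinearEquiv.symm.toLinearMap ∘ₗ LinearMap.mulLeft K d ∘ₗ
        e.toLinearEquiv.toLinearMap := by
    apply LinearMap.ext
    intro y
    simp only [LinearMap.coe_comp, Function.comp_apply, LinearMap.mulLeft_apply,
      LinearEquiv.coe_coe, AlgEquiv.toLinearEquiv_apply]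
    rw [← hφa, ← map_mul]
    exact (e.toLinearEquiv.symm_apply_apply _).symm
  rw [hconj, charpoly_conj_aux]
  have hpi : LinearMap.toMatrix (Pi.basisFun K ↥V) (Pi.basisFun K ↥V)
      (LinearMap.mulLeft K d) = Matrix.diagonal d := by
    ext i j
    rw [LinearMap.toMatrix_apply]
    simp only [LinearMap.mulLeft_apply, Pi.basisFun_apply, Pi.basisFun_repr,
      Pi.mul_apply, Matrix.diagonal_apply, Pi.single_apply]
    by_cases h : i = j <;> simp [h, eq_comm]
  rw [← LinearMap.charpoly_toMatrix (LinearMap.mulLeft K d) (Pi.basisFun K ↥V),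
    hpi, matrix_charpoly_diagonal]
  exact Finset.prod_coe_sort V fun α => X - C (α x₀)
end
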